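/- Let T be an A-module such that Gen(T) equals the class of all modules N that embed into a T-generated module and satisfy Ext^1_A(T, N) = 0. Then Gen(T) ⊆ Pres(T), i.e. every T-generated module is T-presented. -/

import Mathlib

/-!
Let `u : T^(Hom(T,M)) → M` be the universal map; it is onto when `M ∈ Gen T`, and every map
`T → M` lifts through it. By hypothesis `Ext¹(T, T^(Hom(T,M))) = 0`, and the lifting property
transfers this to `K = ker u`: an extension of `T` by `K`, pushed out along `K ↪ T^(Hom(T,M))`,
splits, and the splitting can be corrected by a lift so that it factors back through the
original extension. Thus `K` embeds into a `T`-generated module and has `Ext¹(T, K) = 0`, so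
`K ∈ Gen T` by the hypothesis again.
-/

universe u

open CategoryTheory CategoryTheory.Limits Function

variable {A : Type u} [Ring A]

/-- The class of `T`-generated modules: epimorphic images of direct sums of copies of `T`. -/
def Gen (T : ModuleCat.{u} A) : Set (ModuleCat.{u} A) :=
  {N | ∃ (I : Type u) (f : ModuleCat.of A (I →₀ T) ⟶ N), Surjective f}

/-- `Ext¹_A(T, N) = 0`: every short exact sequence `0 → N → E → T → 0` splits. -/
def Ext1Zero (T N : ModuleCat.{u} A) : Prop :=
  ∀ (E : ModuleCat.{u} A) (i : N ⟶ E) (p : E ⟶ T),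
    Injective i → Surjective p → Function.Exact ⇑i ⇑p → ∃ s : T ⟶ E, s ≫ p = 𝟙 T

/-- `T° = {N | Hom_A(T,N) = 0}`. -/
def Tcirc (T : ModuleCat.{u} A) : Set (ModuleCat.{u} A) :=
  {N | ∀ f : T ⟶ N, f = 0}

/-- `T`-presented modules: an epimorphism from a direct sum of copies of `T` with kernel
generated by `T`. -/
def Pres (T : ModuleCat.{u} A) : Set (ModuleCat.{u} A) :=
  {N | ∃ (I : Type u) (f : ModuleCat.of A (I →₀ T) ⟶ N), Surjective f ∧
    ModuleCat.of A (LinearMap.ker f.hom) ∈ Gen T}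

/-- `𝒟_σ`: modules `X` such that `Hom_A(σ, X)` is surjective. -/
def Dclass {P Q : ModuleCat.{u} A} (σ : P ⟶ Q) : Set (ModuleCat.{u} A) :=
  {X | Surjective (fun g : Q ⟶ X => σ ≫ g)}

/-- `Add T`: direct summands of direct sums of copies of `T`. -/
def AddCl (T : ModuleCat.{u} A) : Set (ModuleCat.{u} A) :=
  {M | ∃ (I : Type u) (s : M ⟶ ModuleCat.of A (I →₀ T))
      (r : ModuleCat.of A (I →₀ T) ⟶ M), s ≫ r = 𝟙 M}

theorem LinearMap.exists_comp_eq_of_range_le {R E G T : Type*} [Semiring R] [AddCommMonoid E]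
    [AddCommMonoid G] [AddCommMonoid T] [Module R E] [Module R G] [Module R T]
    {f : E →ₗ[R] G} (hf : Injective f) {d : T →ₗ[R] G} (h : range d ≤ range f) :
    ∃ w : T →ₗ[R] E, f ∘ₗ w = d :=
  ⟨(LinearEquiv.ofInjective f hf).symm ∘ₗ d.codRestrict _ fun x => h ⟨x, rfl⟩, by
    ext x
    simp⟩

section Pushout

variable {R K E F X : Type*} [Ring R] [AddCommGroup K] [AddCommGroup E] [AddCommGroup F]
  [AddCommGroup X] [Module R K] [Module R E] [Module R F] [Module R X]
  (i : K →ₗ[R] E) (j : K →ₗ[R] F)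

abbrev PushoutModule : Type _ := (F × E) ⧸ LinearMap.range (j.prod (-i))

namespace PushoutModule

def inl : F →ₗ[R] PushoutModule i j := (Submodule.mkQ _).comp (LinearMap.inl R F E)

def inr : E →ₗ[R] PushoutModule i j := (Submodule.mkQ _).comp (LinearMap.inr R F E)

theorem inl_apply_eq_inr_apply (k : K) : inl i j (j k) = inr i j (i k) := by
  refine (Submodule.Quotient.eq _).mpr ⟨k, ?_⟩
  simp

theorem mkQ_apply (y : F × E) :
    Submodule.mkQ _ y = inl i j y.1 + inr i j y.2 := by
  rw [inl, inr, LinearMap.comp_apply, LinearMap.comp_apply, ← map_add]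
  simp

theorem inl_injective (hi : Injective i) : Injective (inl i j) := by
  refine (injective_iff_map_eq_zero _).mpr fun x hx => ?_
  obtain ⟨k, hk⟩ := (Submodule.Quotient.mk_eq_zero _).mp hx
  have hk0 : k = 0 := hi <| by simpa using congrArg Prod.snd hk
  simpa [hk0] using (congrArg Prod.fst hk).symm

theorem inr_injective (hj : Injective j) : Injective (inr i j) := by
  refine (injective_iff_map_eq_zero _).mpr fun e he => ?_
  obtain ⟨k, hk⟩ := (Submodule.Quotient.mk_eq_zero _).mp he
  have hk0 : k = 0 := hj <| by simpa using congrArg Prod.fst hk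
  simpa [hk0] using (congrArg Prod.snd hk).symm

def desc (f : F →ₗ[R] X) (g : E →ₗ[R] X) (h : f ∘ₗ j = g ∘ₗ i) : PushoutModule i j →ₗ[R] X :=
  Submodule.liftQ _ (f.coprod g) <| by
    rintro _ ⟨k, rfl⟩
    simpa [sub_eq_add_neg] using sub_eq_zero.mpr (LinearMap.congr_fun h k)

variable {i j}

@[simp]
theorem desc_inl (f : F →ₗ[R] X) (g : E →ₗ[R] X) (h : f ∘ₗ j = g ∘ₗ i) (x : F) :
    desc i j f g h (inl i j x) = f x := by
  simp [desc, inl]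

@[simp]
theorem desc_inr (f : F →ₗ[R] X) (g : E →ₗ[R] X) (h : f ∘ₗ j = g ∘ₗ i) (e : E) :
    desc i j f g h (inr i j e) = g e := by
  simp [desc, inr]

theorem exact_inl_desc {p : E →ₗ[R] X} (hip : Exact i p) (h : 0 ∘ₗ j = p ∘ₗ i) :
    Exact (inl i j) (desc i j 0 p h) := by
  intro y
  obtain ⟨⟨x, e⟩, rfl⟩ := Submodule.mkQ_surjective _ y
  rw [mkQ_apply, map_add, desc_inl, desc_inr, LinearMap.zero_apply, zero_add]
  constructor
  · intro hpe
    obtain ⟨k, rfl⟩ := (hip e).mp hpe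
    exact ⟨x + j k, by rw [map_add, inl_apply_eq_inr_apply]⟩
  · rintro ⟨x', hx'⟩
    simpa using congrArg (desc i j 0 p h) hx'.symm

theorem exact_inr_desc {u : F →ₗ[R] X} (hju : Exact j u) (h : u ∘ₗ j = 0 ∘ₗ i) :
    Exact (inr i j) (desc i j u 0 h) := by
  intro y
  obtain ⟨⟨x, e⟩, rfl⟩ := Submodule.mkQ_surjective _ y
  rw [mkQ_apply, map_add, desc_inl, desc_inr, LinearMap.zero_apply, add_zero]
  constructor
  · intro hux
    obtain ⟨k, rfl⟩ := (hju x).mp hux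
    exact ⟨i k + e, by rw [map_add, inl_apply_eq_inr_apply]⟩
  · rintro ⟨e', he'⟩
    simpa using congrArg (desc i j u 0 h) he'.symm

end PushoutModule

end Pushout

open PushoutModule in
theorem Ext1Zero.of_exact {T K F M : ModuleCat.{u} A} {j : K ⟶ F} {u : F ⟶ M}
    (hj : Injective j) (hju : Exact j u) (hlift : ∀ g : T ⟶ M, ∃ t : T ⟶ F, t ≫ u = g)
    (hF : Ext1Zero T F) : Ext1Zero T K := by
  intro E i p hi hp hip
  have hq : 0 ∘ₗ j.hom = p.hom ∘ₗ i.hom := by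
    rw [LinearMap.zero_comp, hip.linearMap_comp_eq_zero]
  have hv : u.hom ∘ₗ j.hom = 0 ∘ₗ i.hom := by
    rw [LinearMap.zero_comp, hju.linearMap_comp_eq_zero]
  let q := desc i.hom j.hom 0 p.hom hq
  let v := desc i.hom j.hom u.hom 0 hv
  have hq_surj : Surjective q := fun y =>
    let ⟨e, he⟩ := hp y
    ⟨inr _ _ e, by simpa [q] using he⟩
  obtain ⟨s, hs⟩ := hF (ModuleCat.of A (PushoutModule i.hom j.hom)) (ModuleCat.ofHom (inl _ _))
    (ModuleCat.ofHom q) (inl_injective _ _ hi) hq_surj (exact_inl_desc hip hq)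
  obtain ⟨t, ht⟩ := hlift (s ≫ ModuleCat.ofHom v)
  -- `s - inl ∘ t` is still a section of `q`, and `v` kills it, so it factors through `inr`
  let d := s.hom - inl _ _ ∘ₗ t.hom
  have hvd (y : T) : v (d y) = 0 := by
    simpa [d, v, sub_eq_zero] using (congrArg (fun f => f y) ht).symm
  have hqd (y : T) : q (d y) = y := by
    simpa [d, q] using congrArg (fun f => f y) hs
  obtain ⟨w, hw⟩ := LinearMap.exists_comp_eq_of_range_le (inr_injective _ _ hj) <| by
    rintro _ ⟨y, rfl⟩
    exact ((exact_inr_desc hju hv) (d y)).mp (hvd y)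
  refine ⟨ModuleCat.ofHom w, ModuleCat.hom_ext (LinearMap.ext fun y => ?_)⟩
  calc p (w y) = q (inr _ _ (w y)) := (desc_inr _ _ hq _).symm
    _ = q (d y) := congrArg q (LinearMap.congr_fun hw y)
    _ = y := hqd y

noncomputable def universalMap (T M : ModuleCat.{u} A) : ModuleCat.of A ((T ⟶ M) →₀ T) ⟶ M :=
  ModuleCat.ofHom (Finsupp.lsum ℕ fun g => g.hom)

theorem lsingle_comp_universalMap {T M : ModuleCat.{u} A} (g : T ⟶ M) :
    ModuleCat.ofHom (Finsupp.lsingle g) ≫ universalMap T M = g := by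
  ext x
  simp [universalMap]

theorem surjective_universalMap {T M : ModuleCat.{u} A} (hM : M ∈ Gen T) :
    Surjective (universalMap T M) := by
  obtain ⟨I, f, hf⟩ := hM
  let φ : I → (T ⟶ M) := fun i => ModuleCat.ofHom (f.hom ∘ₗ Finsupp.lsingle i)
  have hfactor : (universalMap T M).hom ∘ₗ Finsupp.lmapDomain T A φ = f.hom := by
    ext i x
    simp [universalMap, φ]
  have hf' : Surjective ((universalMap T M).hom ∘ₗ Finsupp.lmapDomain T A φ) := by
    rw [hfactor]
    exact hf
  rw [LinearMap.coe_comp] at hf'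
  exact hf'.of_comp

theorem finsupp_mem_gen (T : ModuleCat.{u} A) (I : Type u) : ModuleCat.of A (I →₀ T) ∈ Gen T :=
  ⟨I, 𝟙 _, surjective_id⟩

/-- If `Gen T` equals the class of modules embedding into a `T`-generated module with
`Ext¹_A(T, -) = 0`, then every `T`-generated module is `T`-presented. -/
theorem stmt_3 (T : ModuleCat.{u} A)
    (h : Gen T = {N | (∃ M ∈ Gen T, ∃ i : N ⟶ M, Injective i) ∧ Ext1Zero T N}) :
    Gen T ⊆ Pres T := by
  intro M hM
  let u := universalMap T M
  have hF : ModuleCat.of A ((T ⟶ M) →₀ T) ∈ Gen T := finsupp_mem_gen T _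
  have hK : Ext1Zero T (ModuleCat.of A (LinearMap.ker u.hom)) :=
    Ext1Zero.of_exact (j := ModuleCat.ofHom (LinearMap.ker u.hom).subtype)
      (Submodule.injective_subtype _) (LinearMap.exact_subtype_ker_map u.hom)
      (fun g => ⟨_, lsingle_comp_universalMap g⟩) (h ▸ hF).2
  refine ⟨T ⟶ M, u, surjective_universalMap hM, ?_⟩
  rw [h]
  exact ⟨⟨_, hF, _, Submodule.injective_subtype _⟩, hK⟩
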